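/- arXiv:1305.0649 — 3 statements merged into one kernel-verified Lean document; each statement's English description precedes it below -/
import Mathlib

section
/- Let s and t be strings over an alphabet such that s has period π_s and t has period π_t. If s has a suffix of length at least |π_s| + |π_t| that is also a prefix of t, then t has period π_s and s has period π_t. (Lemma 1 of the paper.) -/
/-- `s` has period `π`: `π` is nonempty and `s = ρ π^i τ` for some `i ≥ 1`,
where `ρ` is a (possibly empty) suffix of `π` and `τ` is a (possibly empty) prefix of `π`. -/
def HasPeriod {α : Type*} (s π : List α) : Prop :=
  π ≠ [] ∧ ∃ i : ℕ, 1 ≤ i ∧ ∃ ρ τ : List α, ρ <:+ π ∧ τ <+: π ∧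
    s = ρ ++ (List.replicate i π).flatten ++ τ

/-- `s` has a period of length `p`. -/
def HasPeriodLen {α : Type*} (s : List α) (p : ℕ) : Prop :=
  ∃ π : List α, HasPeriod s π ∧ π.length = p

/-- The shortest period of `s` has length `p`. -/
def IsShortestPeriodLen {α : Type*} (s : List α) (p : ℕ) : Prop :=
  HasPeriodLen s p ∧ ∀ q : ℕ, HasPeriodLen s q → p ≤ q

/-- `s` occurs in `w` at (0-indexed) position `i`, i.e. `w[i..i+|s|) = s`. -/
def OccursAt {α : Type*} (s w : List α) (i : ℕ) : Prop :=
  i + s.length ≤ w.length ∧ (w.drop i).take s.length = s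


section PeriodicityAux
variable {α : Type*}

def patt (π : List α) (x : ℕ) : Option α := π[x % π.length]?

lemma patt_congr {π : List α} {x y : ℕ} (h : x % π.length = y % π.length) :
    patt π x = patt π y := by unfold patt; rw [h]

lemma patt_add_len (π : List α) (x : ℕ) : patt π (x + π.length) = patt π x :=
  patt_congr (Nat.add_mod_right x _)

lemma per_mul {β : Type*} (h : ℕ → β) (q : ℕ) (hq : ∀ x, h (x + q) = h x) :
    ∀ k x, h (x + k * q) = h x := by
  intro k
  induction k with
  | zero => simp
  | succ k ih =>
    intro x
    have e : x + (k+1) * q = (x + k * q) + q := by ring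
    rw [e, hq, ih]

lemma per_gcd {β : Type*} (h : ℕ → β) (p q : ℕ) :
    (∀ x, h (x + p) = h x) → (∀ x, h (x + q) = h x) →
    ∀ x, h (x + Nat.gcd p q) = h x := by
  induction p, q using Nat.gcd.induction with
  | H0 n => intro _ hn x; rw [Nat.gcd_zero_left]; exact hn x
  | H1 m n hm ih =>
    intro hpm hpn x
    rw [Nat.gcd_rec]
    refine ih ?_ hpm x
    intro y
    calc h (y + n % m) = h (y + n % m + (n / m) * m) := (per_mul h m hpm (n/m) _).symm
      _ = h (y + n) := by
          rw [show y + n % m + (n/m) * m = y + n from by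
            have h1 := Nat.div_add_mod n m
            have h2 : (n/m) * m = m * (n/m) := Nat.mul_comm _ _
            omega]
      _ = h y := hpn y

lemma flatten_rep_length (π : List α) (i : ℕ) :
    (List.replicate i π).flatten.length = i * π.length := by
  simp [List.length_flatten, List.map_replicate, List.sum_replicate]

lemma flatten_rep_getElem? (π : List α) :
    ∀ (i x : ℕ), x < i * π.length →
      (List.replicate i π).flatten[x]? = π[x % π.length]? := by
  intro i
  induction i with
  | zero => intro x hx; simp at hx
  | succ i ih =>
    intro x hx
    rw [List.replicate_succ, List.flatten_cons]
    by_cases h : x < π.length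
    · rw [List.getElem?_append_left h, Nat.mod_eq_of_lt h]
    · push_neg at h
      have hsm : (i+1) * π.length = i * π.length + π.length := by ring
      rw [List.getElem?_append_right h, ih (x - π.length) (by omega)]
      congr 1
      conv_rhs => rw [show x = (x - π.length) + π.length from by omega, Nat.add_mod_right]

lemma matches_of_hasPeriod {π s : List α} (h : HasPeriod s π) :
    ∃ a, π.length ≤ s.length ∧ ∀ j, j < s.length → s[j]? = patt π (a + j) := by
  obtain ⟨hne, i, hi, ρ, τ, ⟨ρ', hρ⟩, ⟨τ', hτ⟩, hs⟩ := h
  have hp : 0 < π.length := List.length_pos_iff.mpr hne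
  have hρlen : ρ'.length + ρ.length = π.length := by rw [← hρ, List.length_append]
  have hτlen : τ.length + τ'.length = π.length := by rw [← hτ, List.length_append]
  have hslen : s.length = ρ.length + i * π.length + τ.length := by
    rw [hs]; simp [flatten_rep_length]; ring
  have himul : 1 * π.length ≤ i * π.length := Nat.mul_le_mul_right _ hi
  refine ⟨ρ'.length, by omega, ?_⟩
  intro j hj
  subst hs
  rcases Nat.lt_or_ge j ρ.length with hc1 | hge
  · -- inside ρ
    rw [List.getElem?_append_left (by simp [flatten_rep_length]; omega),
        List.getElem?_append_left hc1]
    unfold patt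
    rw [Nat.mod_eq_of_lt (by omega), ← hρ,
        List.getElem?_append_right (Nat.le_add_right _ _)]
    congr 1
    omega
  · rcases Nat.lt_or_ge j (ρ.length + i * π.length) with hc2 | hc3
    · -- inside the replicated part
      rw [List.getElem?_append_left (by simp [flatten_rep_length]; omega),
          List.getElem?_append_right hge,
          flatten_rep_getElem? π i (j - ρ.length) (by omega)]
      unfold patt
      congr 1
      rw [show ρ'.length + j = (j - ρ.length) + π.length from by omega, Nat.add_mod_right]
    · -- inside τ
      rw [List.getElem?_append_right (by simp [flatten_rep_length]; omega)]
      have hm : j - (ρ ++ (List.replicate i π).flatten).length < τ.length := by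
        simp [flatten_rep_length]; omega
      have hmlen : (ρ ++ (List.replicate i π).flatten).length = ρ.length + i * π.length := by
        simp [flatten_rep_length]
      set m := j - (ρ ++ (List.replicate i π).flatten).length with hmdef
      have hτget : τ[m]? = π[m]? := by
        conv_rhs => rw [← hτ]
        rw [List.getElem?_append_left hm]
      rw [hτget]
      unfold patt
      congr 1
      symm
      have hmul2 : (1 + i) * π.length = π.length + i * π.length := by ring
      rw [hmdef, hmlen] at hm ⊢
      rw [show ρ'.length + j = (j - (ρ.length + i * π.length)) + (1 + i) * π.length from by omega,
          Nat.add_mul_mod_self_right, Nat.mod_eq_of_lt (by omega)]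

lemma hasPeriod_of_aligned {π s : List α} (hne : π ≠ []) (a : ℕ)
    (hmatch : ∀ j, j < s.length → s[j]? = patt π (a + j))
    (j0 : ℕ) (hj0 : (a + j0) % π.length = 0) (hj0len : j0 + π.length ≤ s.length) :
    HasPeriod s π := by
  have hp : 0 < π.length := List.length_pos_iff.mpr hne
  set r := j0 % π.length with hrdef
  have hr : r < π.length := Nat.mod_lt _ hp
  have hra : (a + r) % π.length = 0 := by
    rw [hrdef, Nat.add_mod_mod, hj0]
  have hrle : r ≤ j0 := Nat.mod_le _ _
  have hrlen : r + π.length ≤ s.length := by omega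
  set i := (s.length - r) / π.length with hidef
  set tl := (s.length - r) % π.length with htldef
  have hi : 1 ≤ i := by
    rw [hidef]; rw [Nat.one_le_div_iff hp]; omega
  have htl : tl < π.length := Nat.mod_lt _ hp
  have hlen_eq : s.length = r + i * π.length + tl := by
    have h1 := Nat.div_add_mod (s.length - r) π.length
    rw [← hidef, ← htldef] at h1
    have h2 : i * π.length = π.length * i := Nat.mul_comm _ _
    omega
  -- key residue fact about a
  have key : (a % π.length = 0 ∧ r = 0) ∨ a % π.length + r = π.length := by
    have h1 : (a % π.length + r) % π.length = 0 := by rw [Nat.mod_add_mod]; exact hra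
    have h2 : a % π.length < π.length := Nat.mod_lt _ hp
    rcases Nat.lt_or_ge (a % π.length + r) π.length with h | h
    · left; rw [Nat.mod_eq_of_lt h] at h1; omega
    · right
      rw [Nat.mod_eq_sub_mod h, Nat.mod_eq_of_lt (by omega)] at h1
      omega
  refine ⟨hne, i, hi, π.drop (π.length - r), π.take tl, List.drop_suffix _ _,
    List.take_prefix _ _, ?_⟩
  have hlen1 : (π.drop (π.length - r)).length = r := by
    rw [List.length_drop]; omega
  have hlen2 : (π.drop (π.length - r) ++ (List.replicate i π).flatten).length
      = r + i * π.length := by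
    rw [List.length_append, hlen1, flatten_rep_length]
  apply List.ext_getElem?
  intro j
  rcases Nat.lt_or_ge j s.length with hj | hj
  · rw [hmatch j hj]
    rcases Nat.lt_or_ge j r with hc1 | hge
    · have hrpos : 0 < r := by omega
      have hapr : a % π.length + r = π.length := by
        rcases key with ⟨h1, h2⟩ | h1 <;> omega
      rw [List.getElem?_append_left (by rw [hlen2]; omega),
          List.getElem?_append_left (by rw [hlen1]; omega),
          List.getElem?_drop]
      unfold patt
      congr 1
      calc (a + j) % π.length = (a % π.length + j) % π.length := by rw [Nat.mod_add_mod]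
        _ = a % π.length + j := Nat.mod_eq_of_lt (by omega)
        _ = π.length - r + j := by omega
    · rcases Nat.lt_or_ge j (r + i * π.length) with hc2 | hc3
      · rw [List.getElem?_append_left (by rw [hlen2]; omega),
            List.getElem?_append_right (by rw [hlen1]; omega),
            hlen1, flatten_rep_getElem? π i (j - r) (by omega)]
        unfold patt
        congr 1
        rw [← Nat.mod_add_mod]
        rcases key with ⟨h1, h2⟩ | h1
        · rw [show a % π.length + j = j - r from by omega]
        · rw [show a % π.length + j = (j - r) + π.length from by omega, Nat.add_mod_right]
      · rw [List.getElem?_append_right (by rw [hlen2]; omega), hlen2]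
        have hm : j - (r + i * π.length) < tl := by omega
        rw [List.getElem?_take_of_lt hm]
        unfold patt
        congr 1
        rw [← Nat.mod_add_mod]
        have hmul2 : (1 + i) * π.length = π.length + i * π.length := by ring
        rcases key with ⟨h1, h2⟩ | h1
        · rw [show a % π.length + j = (j - (r + i * π.length)) + i * π.length from by omega,
              Nat.add_mul_mod_self_right, Nat.mod_eq_of_lt (by omega)]
        · rw [show a % π.length + j = (j - (r + i * π.length)) + (1 + i) * π.length from by omega,
              Nat.add_mul_mod_self_right, Nat.mod_eq_of_lt (by omega)]
  · rw [List.getElem?_eq_none (by omega), List.getElem?_eq_none]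
    rw [List.length_append, hlen2, List.length_take]
    omega

lemma hasPeriod_of_matches {π s : List α} (hne : π ≠ []) (a q : ℕ) (hq : 0 < q)
    (hper : ∀ x, patt π (x + q) = patt π x)
    (hmatch : ∀ j, j < s.length → s[j]? = patt π (a + j))
    (hlen : π.length + q ≤ s.length) : HasPeriod s π := by
  have hp : 0 < π.length := List.length_pos_iff.mpr hne
  have hgper : ∀ x, patt π (x + Nat.gcd π.length q) = patt π x :=
    per_gcd (patt π) π.length q (patt_add_len π) hper
  set g := Nat.gcd π.length q with hgdef
  have hgp : g ∣ π.length := Nat.gcd_dvd_left _ _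
  have hgq : g ∣ q := Nat.gcd_dvd_right _ _
  have hg0 : 0 < g := Nat.gcd_pos_of_pos_right _ hq
  have hgleq : g ≤ q := Nat.le_of_dvd hq hgq
  obtain ⟨dp, hdp⟩ := hgp
  have hdp0 : 0 < dp := by
    rcases Nat.eq_zero_or_pos dp with h | h
    · rw [h, Nat.mul_zero] at hdp; omega
    · exact h
  set a0 := a % π.length with ha0def
  have ha0lt : a0 < π.length := Nat.mod_lt _ hp
  have hm0 : ∀ j, j < s.length → s[j]? = patt π (a0 + j) := by
    intro j hj
    rw [hmatch j hj]
    exact patt_congr (by rw [ha0def, Nat.mod_add_mod])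
  have hgle : g ≤ π.length := Nat.le_of_dvd hp ⟨dp, hdp⟩
  obtain ⟨M, hM⟩ : ∃ M, a0 + M * g = (a0 % g + (π.length - g)) + π.length := by
    refine ⟨2 * dp - 1 - a0 / g, ?_⟩
    have hdm := Nat.div_add_mod a0 g
    have hcomm : dp * g = g * dp := Nat.mul_comm _ _
    have hdivlt : a0 / g < dp := Nat.div_lt_of_lt_mul (by omega)
    have h1 : a0 / g + (2 * dp - 1 - a0 / g) = 2 * dp - 1 := by omega
    have h2 : g * (a0 / g) + g * (2 * dp - 1 - a0 / g) = g * (2 * dp - 1) := by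
      rw [← Nat.mul_add, h1]
    have h3 : g * (2 * dp) = g * (2 * dp - 1) + g := by
      conv_lhs => rw [show 2 * dp = (2 * dp - 1) + 1 from by omega, Nat.mul_succ]
    have h4 : g * (2 * dp) = 2 * π.length := by rw [hdp]; ring
    have h5 : (2 * dp - 1 - a0 / g) * g = g * (2 * dp - 1 - a0 / g) := Nat.mul_comm _ _
    omega
  have hm2 : ∀ j, j < s.length → s[j]? = patt π ((a0 % g + (π.length - g)) + j) := by
    intro j hj
    rw [hm0 j hj]
    calc patt π (a0 + j) = patt π (a0 + j + M * g) := (per_mul (patt π) g hgper M _).symm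
      _ = patt π ((a0 % g + (π.length - g)) + j + π.length) := by
          rw [show a0 + j + M * g = (a0 % g + (π.length - g)) + j + π.length from by omega]
      _ = patt π ((a0 % g + (π.length - g)) + j) := patt_add_len π _
  have ha0g : a0 % g < g := Nat.mod_lt _ hg0
  apply hasPeriod_of_aligned hne _ hm2 (g - a0 % g)
  · rw [show a0 % g + (π.length - g) + (g - a0 % g) = π.length from by omega, Nat.mod_self]
  · omega

end PeriodicityAux

/-- If `s` has period `πs`, `t` has period `πt`, and `s` has a suffix of length at
least `|πs| + |πt|` that is also a prefix of `t`, then `t` has period `πs` and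
`s` has period `πt`. -/
theorem periodicity_transfer {α : Type*} {s t πs πt : List α}
    (hs : HasPeriod s πs) (ht : HasPeriod t πt)
    (f : List α) (hfs : f <:+ s) (hft : f <+: t)
    (hflen : πs.length + πt.length ≤ f.length) :
    HasPeriod t πs ∧ HasPeriod s πt := by
  have hπs : πs ≠ [] := hs.1
  have hπt : πt ≠ [] := ht.1
  have hp : 0 < πs.length := List.length_pos_iff.mpr hπs
  have hq : 0 < πt.length := List.length_pos_iff.mpr hπt
  obtain ⟨as, hsl, hmS⟩ := matches_of_hasPeriod hs
  obtain ⟨at', htl, hmT⟩ := matches_of_hasPeriod ht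
  obtain ⟨u, hu⟩ := hfs
  obtain ⟨v, hv⟩ := hft
  have hus : s.length = u.length + f.length := by rw [← hu, List.length_append]
  have htv : t.length = f.length + v.length := by rw [← hv, List.length_append]
  -- f matches the πs pattern at offset as + u.length
  have hfS : ∀ j, j < f.length → f[j]? = patt πs ((as + u.length) + j) := by
    intro j hj
    have h1 : s[u.length + j]? = patt πs (as + (u.length + j)) := hmS _ (by omega)
    have h2 : s[u.length + j]? = f[j]? := by
      rw [← hu, List.getElem?_append_right (Nat.le_add_right _ _)]
      congr 1
      omega
    rw [← h2, h1]
    congr 1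
    omega
  -- f matches the πt pattern at offset at'
  have hfT : ∀ j, j < f.length → f[j]? = patt πt (at' + j) := by
    intro j hj
    have h1 : t[j]? = patt πt (at' + j) := hmT _ (by omega)
    rw [← h1, ← hv, List.getElem?_append_left hj]
  -- transfer of circular periods
  have step : ∀ (πa πb : List α) (aa ab : ℕ), 0 < πa.length → 0 < πb.length →
      πa.length + πb.length ≤ f.length →
      (∀ j, j < f.length → f[j]? = patt πa (aa + j)) →
      (∀ j, j < f.length → f[j]? = patt πb (ab + j)) →
      ∀ x, patt πa (x + πb.length) = patt πa x := by
    intro πa πb aa ab hpa hpb hab h1 h2 x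
    set j := (x + (πa.length - aa % πa.length)) % πa.length with hjdef
    have hjlt : j < πa.length := Nat.mod_lt _ hpa
    have factA : (aa + j) % πa.length = x % πa.length := by
      have hdm := Nat.div_add_mod aa πa.length
      have hml : aa % πa.length < πa.length := Nat.mod_lt _ hpa
      calc (aa + j) % πa.length
          = (aa + (x + (πa.length - aa % πa.length))) % πa.length := by
            rw [hjdef, Nat.add_mod_mod]
        _ = (x + (πa.length * (aa / πa.length) + πa.length)) % πa.length := by
            rw [show aa + (x + (πa.length - aa % πa.length))
                = x + (πa.length * (aa / πa.length) + πa.length) from by omega]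
        _ = (x + πa.length * (aa / πa.length)) % πa.length := by
            rw [← Nat.add_assoc, Nat.add_mod_right]
        _ = x % πa.length := Nat.add_mul_mod_self_left x _ _
    have e1 : patt πa (aa + j) = patt πa x := patt_congr factA
    have e2 : patt πa (aa + (j + πb.length)) = patt πa (x + πb.length) := by
      apply patt_congr
      have : (aa + j) + πb.length ≡ x + πb.length [MOD πa.length] :=
        Nat.ModEq.add_right _ factA
      calc (aa + (j + πb.length)) % πa.length
          = ((aa + j) + πb.length) % πa.length := by rw [Nat.add_assoc]
        _ = (x + πb.length) % πa.length := this
    have e3 : f[j]? = f[j + πb.length]? := by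
      rw [h2 j (by omega), h2 (j + πb.length) (by omega),
          show ab + (j + πb.length) = (ab + j) + πb.length from by ring, patt_add_len]
    calc patt πa (x + πb.length) = patt πa (aa + (j + πb.length)) := e2.symm
      _ = f[j + πb.length]? := (h1 (j + πb.length) (by omega)).symm
      _ = f[j]? := e3.symm
      _ = patt πa (aa + j) := h1 j (by omega)
      _ = patt πa x := e1
  have perS_q : ∀ x, patt πs (x + πt.length) = patt πs x :=
    step πs πt (as + u.length) at' hp hq hflen hfS hfT
  have perT_p : ∀ x, patt πt (x + πs.length) = patt πt x :=
    step πt πs at' (as + u.length) hq hp (by omega) hfT hfS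
  constructor
  · -- t has period πs
    have hmT2 : ∀ j, j < t.length → t[j]? = patt πs ((as + u.length) + j) := by
      intro j
      induction j using Nat.strong_induction_on with
      | _ j ih =>
        intro hj
        by_cases hjf : j < f.length
        · rw [← hv, List.getElem?_append_left hjf]; exact hfS j hjf
        · push_neg at hjf
          calc t[j]? = patt πt (at' + j) := hmT j hj
            _ = patt πt (at' + (j - πt.length) + πt.length) := by congr 1; omega
            _ = patt πt (at' + (j - πt.length)) := patt_add_len _ _
            _ = t[j - πt.length]? := (hmT _ (by omega)).symm
            _ = patt πs ((as + u.length) + (j - πt.length)) := ih _ (by omega) (by omega)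
            _ = patt πs ((as + u.length) + (j - πt.length) + πt.length) := (perS_q _).symm
            _ = patt πs ((as + u.length) + j) := by congr 1; omega
    exact hasPeriod_of_matches hπs (as + u.length) πt.length hq perS_q hmT2 (by omega)
  · -- s has period πt
    have hdq : u.length ≤ u.length * πt.length := Nat.le_mul_of_pos_right _ hq
    have hmS2 : ∀ k j, s.length ≤ j + k → j < s.length →
        s[j]? = patt πt ((at' + (u.length * πt.length - u.length)) + j) := by
      intro k
      induction k with
      | zero => intro j h1 h2; omega
      | succ k ih =>
        intro j h1 h2
        by_cases hd : u.length ≤ j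
        · have hjd : j - u.length < f.length := by omega
          calc s[j]? = f[j - u.length]? := by
                rw [← hu, List.getElem?_append_right hd]
            _ = patt πt (at' + (j - u.length)) := hfT _ hjd
            _ = patt πt (at' + (j - u.length) + u.length * πt.length) :=
                (per_mul (patt πt) πt.length (patt_add_len πt) u.length _).symm
            _ = patt πt ((at' + (u.length * πt.length - u.length)) + j) := by congr 1; omega
        · push_neg at hd
          have hjp : j + πs.length < s.length := by omega
          calc s[j]? = patt πs (as + j) := hmS j h2
            _ = patt πs (as + j + πs.length) := (patt_add_len _ _).symm
            _ = patt πs (as + (j + πs.length)) := by congr 1; omega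
            _ = s[j + πs.length]? := (hmS _ hjp).symm
            _ = patt πt ((at' + (u.length * πt.length - u.length)) + (j + πs.length)) :=
                ih (j + πs.length) (by omega) hjp
            _ = patt πt ((at' + (u.length * πt.length - u.length)) + j + πs.length) := by
                congr 1; omega
            _ = patt πt ((at' + (u.length * πt.length - u.length)) + j) := perT_p _
    exact hasPeriod_of_matches hπt (at' + (u.length * πt.length - u.length)) πs.length hp
      perT_p (fun j hj => hmS2 s.length j (by omega) hj) (by omega)
end

section
/- Let u and v be strings whose shortest periods have lengths p and q respectively. If some string f of length at least p + q is simultaneously a contiguous substring of u and a contiguous substring of v, then p = q and there exists a string π of length p that is a period of both u and v. (This is the common-shortest-period claim used in the proof of the Fact inside Lemma 3.1 and in the correctness proof of Frame Rule 4.) -/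
/-! ### Auxiliary machinery -/

/-- Pointwise periodicity. -/
def PtP {α : Type*} (s : List α) (p : ℕ) : Prop :=
  ∀ x : ℕ, x + p < s.length → s[x]? = s[x + p]?

lemma len_rep {α : Type*} (t : List α) (n : ℕ) :
    ((List.replicate n t).flatten).length = n * t.length := by
  induction n with
  | zero => simp
  | succ n ih => simp [List.replicate_succ, ih]; ring

lemma rep_comm {α : Type*} (t : List α) (n : ℕ) :
    t ++ (List.replicate n t).flatten = (List.replicate n t).flatten ++ t := by
  induction n with
  | zero => simp
  | succ n ih =>
    simp only [List.replicate_succ, List.flatten_cons]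
    rw [List.append_assoc, ← ih]

lemma ptp_of_prefix {α : Type*} {s μ : List α} (h : s <+: μ ++ s) : PtP s μ.length := by
  intro x hx
  obtain ⟨r, hr⟩ := h
  have h1 : (μ ++ s)[x + μ.length]? = s[x + μ.length]? := by
    rw [← hr, List.getElem?_append_left (by omega)]
  rw [← h1, List.getElem?_append_right (by omega)]
  simp

lemma ptp_drop {α : Type*} {s : List α} {p : ℕ} (h : PtP s p) (r : ℕ) : PtP (s.drop r) p := by
  intro x hx
  rw [List.length_drop] at hx
  rw [List.getElem?_drop, List.getElem?_drop]
  rw [show r + (x + p) = (r + x) + p from by omega]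
  exact h (r + x) (by omega)

lemma ptp_mul {α : Type*} {s : List α} {p : ℕ} (h : PtP s p) :
    ∀ k x, x + k * p < s.length → s[x]? = s[x + k * p]? := by
  intro k
  induction k with
  | zero => simp
  | succ k ih =>
    intro x hx
    rw [Nat.succ_mul] at hx ⊢
    rw [show x + (k * p + p) = x + k * p + p from by omega]
    rw [← h (x + k * p) (by omega)]
    exact ih x (by omega)

lemma occ_get {α : Type*} {f u : List α} {i : ℕ} (h : OccursAt f u i) :
    ∀ x, x < f.length → f[x]? = u[i + x]? := by
  intro x hx
  conv_lhs => rw [← h.2]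
  rw [List.getElem?_take, if_pos hx, List.getElem?_drop]

lemma ptp_occ {α : Type*} {f u : List α} {i p : ℕ} (h : OccursAt f u i) (hu : PtP u p) :
    PtP f p := by
  intro x hx
  rw [occ_get h x (by omega), occ_get h (x + p) hx]
  rw [show i + (x + p) = (i + x) + p from by omega]
  exact hu (i + x) (by have := h.1; omega)

/-- From `HasPeriod` to pointwise periodicity. -/
lemma hasPeriod_ptp {α : Type*} {s π : List α} (h : HasPeriod s π) :
    0 < π.length ∧ π.length ≤ s.length ∧ PtP s π.length := by
  obtain ⟨hne, i, hi, ρ, τ, hρ, hτ, hs⟩ := h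
  obtain ⟨σ, hσ⟩ := hρ
  have hπ0 : 0 < π.length := List.length_pos_iff.mpr hne
  have hlen : π.length ≤ s.length := by
    have : s.length = ρ.length + i * π.length + τ.length := by
      rw [hs]; simp [len_rep]; ring
    have h1 : 1 * π.length ≤ i * π.length := Nat.mul_le_mul_right _ hi
    omega
  have key : (ρ ++ σ) ++ s = (ρ ++ (List.replicate i π).flatten) ++ (π ++ τ) := by
    rw [hs]
    simp only [List.append_assoc]
    congr 1
    rw [← List.append_assoc σ ρ, hσ, ← List.append_assoc π, rep_comm,
      List.append_assoc]
  have hpre : s <+: (ρ ++ σ) ++ s := by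
    rw [key]
    conv_lhs => rw [hs]
    rw [List.append_assoc, List.append_assoc, List.prefix_append_right_inj,
      List.prefix_append_right_inj]
    exact hτ.trans (List.prefix_append π τ)
  have hμ : (ρ ++ σ).length = π.length := by
    have := congrArg List.length hσ
    simp at this ⊢
    omega
  refine ⟨hπ0, hlen, ?_⟩
  have := ptp_of_prefix hpre
  rwa [hμ] at this

lemma drop_p_prefix {α : Type*} {s : List α} {p : ℕ} (h : PtP s p) : s.drop p <+: s := by
  have he : s.drop p = s.take (s.length - p) := by
    apply List.ext_getElem?
    intro x
    rw [List.getElem?_drop, List.getElem?_take]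
    split
    · rename_i hx
      rw [show p + x = x + p from by omega]
      exact (h x (by omega)).symm
    · rename_i hx
      apply List.getElem?_eq_none
      omega
  rw [he]; exact List.take_prefix _ _

/-- Decomposition of a string with a full leading period copy. -/
lemma core_decomp {α : Type*} (t : List α) (ht : t ≠ []) :
    ∀ m (s : List α), s.length ≤ m → t.length ≤ s.length → s <+: t ++ s →
    ∃ i, 1 ≤ i ∧ ∃ τ, τ <+: t ∧ s = (List.replicate i t).flatten ++ τ := by
  intro m
  induction m with
  | zero =>
    intro s h1 h2 _
    have := List.length_pos_iff.mpr ht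
    omega
  | succ m ih =>
    intro s hsm hts hpre
    have ht0 := List.length_pos_iff.mpr ht
    have hts' : t <+: s :=
      List.prefix_of_prefix_length_le (List.prefix_append t s) hpre hts
    obtain ⟨s'', hs''⟩ := hts'
    have hlen : s.length = t.length + s''.length := by
      rw [← hs'']; simp
    have h2 : s'' <+: t ++ s'' := by
      have h2' : t ++ s'' <+: t ++ (t ++ s'') := by rw [hs'']; exact hpre
      exact (List.prefix_append_right_inj t).mp h2'
    by_cases hc : t.length ≤ s''.length
    · obtain ⟨i, hi, τ, hτ, he⟩ := ih s'' (by omega) hc h2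
      refine ⟨i + 1, by omega, τ, hτ, ?_⟩
      rw [← hs'', he]
      simp [List.replicate_succ, List.append_assoc]
    · have hst : s'' <+: t :=
        List.prefix_of_prefix_length_le h2 (List.prefix_append t s'') (by omega)
      exact ⟨1, le_rfl, s'', hst, by simp [← hs'']⟩

lemma window_shift {α : Type*} {s : List α} {p : ℕ} (hpt : PtP s p) (hp0 : 0 < p)
    (j : ℕ) (hj : j + p ≤ s.length) :
    (s.drop j).take p = (s.drop (j % p)).take p := by
  apply List.ext_getElem?
  intro x
  rw [List.getElem?_take, List.getElem?_take, List.getElem?_drop, List.getElem?_drop]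
  split
  · rename_i hxp
    have hdm := Nat.div_add_mod j p
    have hmc : (j / p) * p = p * (j / p) := Nat.mul_comm _ _
    have := ptp_mul hpt (j / p) (j % p + x) (by omega)
    rw [show j % p + x + j / p * p = j + x from by omega] at this
    rw [show j % p + x = j % p + x from rfl] at this
    exact this.symm ▸ (by rw [← this])
  · rfl

/-- Reconstruct a `HasPeriod` witness from pointwise periodicity: any window of
length `p` is a period. -/
lemma hasPeriod_window {α : Type*} {s : List α} {p : ℕ} (hp0 : 0 < p) (hpt : PtP s p)
    (j : ℕ) (hj : j + p ≤ s.length) : HasPeriod s ((s.drop j).take p) := by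
  rw [window_shift hpt hp0 j hj]
  set r := j % p with hr
  have hrj : r ≤ j := Nat.mod_le j p
  have hrp : r < p := Nat.mod_lt j hp0
  have hrs : r + p ≤ s.length := by omega
  set w := (s.drop r).take p with hw
  have hwlen : w.length = p := by
    rw [hw, List.length_take, List.length_drop]; omega
  have hwne : w ≠ [] := by
    intro h; rw [h] at hwlen; simp at hwlen; omega
  have hpt' : PtP (s.drop r) p := ptp_drop hpt r
  have hdp : (s.drop r).drop p <+: s.drop r := drop_p_prefix hpt'
  have hpre : s.drop r <+: w ++ s.drop r := by
    rw [hw]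
    conv_lhs => rw [← List.take_append_drop p (s.drop r)]
    rw [List.prefix_append_right_inj]
    exact hdp
  obtain ⟨iN, hiN, τ, hτ, hdec⟩ :=
    core_decomp w hwne (s.drop r).length (s.drop r) le_rfl
      (by rw [List.length_drop, hwlen]; omega) hpre
  have hρeq : s.take r = w.drop (p - r) := by
    rw [hw, List.drop_take, List.drop_drop]
    rw [show p - (p - r) = r from by omega, show r + (p - r) = p from by omega]
    apply List.ext_getElem?
    intro x
    rw [List.getElem?_take, List.getElem?_take, List.getElem?_drop]
    split
    · rename_i hx
      rw [show p + x = x + p from by omega]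
      exact hpt x (by omega)
    · rfl
  have hρ : s.take r <:+ w := hρeq ▸ List.drop_suffix (p - r) w
  refine ⟨hwne, iN, hiN, s.take r, τ, hρ, hτ, ?_⟩
  conv_lhs => rw [← List.take_append_drop r s]
  rw [hdec, ← List.append_assoc]

/-! ### Fine–Wilf -/

lemma fw_step {β : Type*} (g : ℕ → β) (n p q : ℕ) (hp : 0 < p) (hlt : p < q) (hn : p + q ≤ n)
    (h1 : ∀ x, x + p < n → g x = g (x + p)) (h2 : ∀ x, x + q < n → g x = g (x + q)) :
    ∀ x, x + (q - p) < n → g x = g (x + (q - p)) := by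
  intro x hx
  by_cases hc : x + q < n
  · have e1 := h2 x hc
    have e2 := h1 (x + (q - p)) (by omega)
    rw [show x + (q - p) + p = x + q from by omega] at e2
    rw [e1, ← e2]
  · have e1 := h1 (x - p) (by omega)
    rw [show x - p + p = x from by omega] at e1
    have e2 := h2 (x - p) (by omega)
    rw [show x - p + q = x + (q - p) from by omega] at e2
    rw [← e1, e2]

lemma fw_aux {β : Type*} (g : ℕ → β) (n : ℕ) :
    ∀ m p q, p + q ≤ m → 0 < p → 0 < q → p + q ≤ n →
    (∀ x, x + p < n → g x = g (x + p)) → (∀ x, x + q < n → g x = g (x + q)) →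
    ∀ x, x + Nat.gcd p q < n → g x = g (x + Nat.gcd p q) := by
  intro m
  induction m with
  | zero => intro p q h hp; exact absurd hp (by omega)
  | succ m ih =>
    intro p q hm hp hq hn h1 h2
    rcases lt_trichotomy p q with hlt | heq | hgt
    · have h3 := fw_step g n p q hp hlt hn h1 h2
      have hg : Nat.gcd p (q - p) = Nat.gcd p q := by
        conv_rhs => rw [show q = (q - p) + p from by omega]
        rw [Nat.gcd_add_self_right]
      have := ih p (q - p) (by omega) hp (by omega) (by omega) h1 h3
      rwa [hg] at this
    · subst heq
      simpa [Nat.gcd_self] using h1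
    · have h3 := fw_step g n q p hq hgt (by omega) h2 h1
      have hg : Nat.gcd q (p - q) = Nat.gcd p q := by
        rw [Nat.gcd_comm p q]
        conv_rhs => rw [show p = (p - q) + q from by omega]
        rw [Nat.gcd_add_self_right]
      have := ih q (p - q) (by omega) hq (by omega) (by omega) h2 h3
      rwa [hg] at this

lemma ptp_gcd {α : Type*} {f : List α} {p q : ℕ} (hp : 0 < p) (hq : 0 < q)
    (hn : p + q ≤ f.length) (h1 : PtP f p) (h2 : PtP f q) : PtP f (Nat.gcd p q) := by
  intro x hx
  exact fw_aux (fun n => f[n]?) f.length (p + q) p q le_rfl hp hq hn h1 h2 x hx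

/-- Propagate a period seen on a window back to the whole string. -/
lemma ptp_propagate {α : Type*} {u f : List α} {p g i : ℕ} (hocc : OccursAt f u i)
    (hup : PtP u p) (hfg : PtP f g) (hp0 : 0 < p) (hlen : p + g ≤ f.length) :
    PtP u g := by
  have hif := hocc.1
  intro x hx
  have key : ∀ t, i ≤ t → t < i + p → u[t]? = u[t + g]? := by
    intro t h1 h2
    have h3 : t - i + g < f.length := by omega
    have e1 := occ_get hocc (t - i) (by omega)
    have e2 := occ_get hocc (t - i + g) h3
    rw [show i + (t - i) = t from by omega] at e1
    rw [show i + (t - i + g) = t + g from by omega] at e2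
    rw [← e1, ← e2]
    exact hfg (t - i) h3
  rcases le_or_gt i x with hge | hlt
  · set k := (x - i) / p with hk
    set t := i + (x - i) % p with ht
    have hdm := Nat.div_add_mod (x - i) p
    have hmc : k * p = p * ((x - i) / p) := Nat.mul_comm _ _
    have hmlt : (x - i) % p < p := Nat.mod_lt _ hp0
    have htx : t + k * p = x := by omega
    have h2 : t < i + p := by omega
    have htg : t + g < u.length := by omega
    have e1 := ptp_mul hup k t (by omega)
    have e2 := ptp_mul hup k (t + g) (by omega)
    rw [htx] at e1
    rw [show t + g + k * p = x + g from by omega] at e2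
    rw [← e1, ← e2]
    exact key t (by omega) h2
  · set d := i - x with hd
    set k := (d + p - 1) / p with hk
    have hdm := Nat.div_add_mod (d + p - 1) p
    have hmc : k * p = p * ((d + p - 1) / p) := Nat.mul_comm _ _
    have hmlt : (d + p - 1) % p < p := Nat.mod_lt _ hp0
    set t := x + k * p with ht
    have h1 : i ≤ t := by omega
    have h2 : t < i + p := by omega
    have htg : t + g < u.length := by omega
    have e1 := ptp_mul hup k x (by omega)
    have e2 := ptp_mul hup k (x + g) (by omega)
    rw [show x + g + k * p = t + g from by omega] at e2
    rw [← ht] at e1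
    rw [e1, e2]
    exact key t h1 h2

/-! ### Main theorem -/

/-- If the shortest periods of `u` and `v` have lengths `p` and `q` respectively, and
some string `f` of length at least `p + q` is a contiguous substring of both `u`
and `v`, then `p = q` and `u` and `v` have a common period `π` of length `p`. -/
theorem common_shortest_period {α : Type*} {u v : List α} {p q : ℕ}
    (hp : IsShortestPeriodLen u p) (hq : IsShortestPeriodLen v q)
    (f : List α) (hflen : p + q ≤ f.length)
    (hfu : ∃ i : ℕ, OccursAt f u i) (hfv : ∃ j : ℕ, OccursAt f v j) :
    p = q ∧ ∃ π : List α, π.length = p ∧ HasPeriod u π ∧ HasPeriod v π := by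
  obtain ⟨⟨πu, hπu, hπulen⟩, hpmin⟩ := hp
  obtain ⟨⟨πv, hπv, hπvlen⟩, hqmin⟩ := hq
  obtain ⟨i, hi⟩ := hfu
  obtain ⟨j, hj⟩ := hfv
  obtain ⟨hp0, hpu, hptu⟩ := hasPeriod_ptp hπu
  rw [hπulen] at hp0 hpu hptu
  obtain ⟨hq0, hqv, hptv⟩ := hasPeriod_ptp hπv
  rw [hπvlen] at hq0 hqv hptv
  have hfp : PtP f p := ptp_occ hi hptu
  have hfq : PtP f q := ptp_occ hj hptv
  set g := Nat.gcd p q with hgdef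
  have hgp : g ≤ p := Nat.le_of_dvd hp0 (Nat.gcd_dvd_left p q)
  have hgq : g ≤ q := Nat.le_of_dvd hq0 (Nat.gcd_dvd_right p q)
  have hg0 : 0 < g := Nat.gcd_pos_of_pos_left q hp0
  have hfg : PtP f g := ptp_gcd hp0 hq0 hflen hfp hfq
  have hug : PtP u g := ptp_propagate hi hptu hfg hp0 (by omega)
  have hvg : PtP v g := ptp_propagate hj hptv hfg hq0 (by omega)
  have hulen : HasPeriodLen u g := by
    refine ⟨(u.drop 0).take g, hasPeriod_window hg0 hug 0 (by omega), ?_⟩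
    rw [List.drop_zero, List.length_take]; omega
  have hvlen : HasPeriodLen v g := by
    refine ⟨(v.drop 0).take g, hasPeriod_window hg0 hvg 0 (by omega), ?_⟩
    rw [List.drop_zero, List.length_take]; omega
  have hpg : p = g := le_antisymm (hpmin g hulen) hgp
  have hqg : q = g := le_antisymm (hqmin g hvlen) hgq
  have hif := hi.1
  have hjf := hj.1
  refine ⟨by omega, f.take p, by rw [List.length_take]; omega, ?_, ?_⟩
  · have hwu := hasPeriod_window hp0 hptu i (by omega)
    have heq : (u.drop i).take p = f.take p := by
      conv_rhs => rw [← hi.2]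
      rw [List.take_take]
      congr 1
      omega
    rwa [heq] at hwu
  · have hwv := hasPeriod_window hq0 hptv j (by omega)
    have heq : (v.drop j).take q = f.take p := by
      conv_rhs => rw [← hj.2]
      rw [List.take_take]
      congr 1
      omega
    rwa [heq] at hwv
end

section
/- Let s be a string whose shortest period has length p, let w be a string, let W ≥ 0 be an integer, and let P be a nonempty finite set of positions at which s occurs in w. If max(P) − min(P) ≤ |s| − p and max(P) − min(P) ≤ W, then |P| ≤ ⌊W/p⌋ + 1. (This counting bound is the combinatorial core of Lemma 6.3, which bounds the number of feasible alignments of a repetitive solid piece by 24k² + 18k when the adjacent fragile pieces have length at most (12k² + 9k)·p.) -/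
/-- If `s.drop d` is a prefix of `s` (a self-overlap at shift `d`), then `s` can be
written as `(s.take d)^i ++ τ` with `τ` a prefix of `s.take d`. -/
lemma period_aux {α : Type*} : ∀ n (s : List α) (d : ℕ), s.length = n → 1 ≤ d →
    d ≤ s.length → s.drop d <+: s →
    ∃ i : ℕ, 1 ≤ i ∧ ∃ τ : List α, τ <+: s.take d ∧
      s = (List.replicate i (s.take d)).flatten ++ τ := by
  intro n
  induction n using Nat.strong_induction_on with
  | _ n IH =>
    intro s d hn hd1 hds hpre
    by_cases hcase : (s.drop d).length < d
    · refine ⟨1, le_refl 1, s.drop d, ?_, ?_⟩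
      · exact List.prefix_take_iff.2 ⟨hpre, le_of_lt hcase⟩
      · simp [List.take_append_drop]
    · push_neg at hcase
      set s' := s.drop d with hs'
      have hs'len : s'.length = s.length - d := by simp [hs']
      have hs'pref : s' = s.take (s.length - d) := by
        rw [← hs'len]
        exact List.prefix_iff_eq_take.1 hpre
      have hlt : s'.length < n := by
        rw [hs'len, ← hn]; omega
      have htake : s'.take d = s.take d := by
        rw [hs'pref, List.take_take]
        congr 1
        omega
      have hdrop : s'.drop d <+: s' := by
        rw [hs'pref, List.drop_take, ← hs'pref]
        exact List.take_prefix _ _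
      obtain ⟨i, hi1, τ, hτ, heq⟩ := IH s'.length hlt s' d rfl hd1 (by omega) hdrop
      refine ⟨i + 1, by omega, τ, by rwa [htake] at hτ, ?_⟩
      rw [htake] at heq
      calc s = s.take d ++ s' := (List.take_append_drop d s).symm
        _ = s.take d ++ ((List.replicate i (s.take d)).flatten ++ τ) := by rw [heq]
        _ = (List.replicate (i + 1) (s.take d)).flatten ++ τ := by
            simp [List.replicate_succ, List.flatten_cons, List.append_assoc]


/-- If the shortest period of `s` has length `p` and `P` is a nonempty finite set of
positions at which `s` occurs in `w`, with `max P - min P ≤ |s| - p` and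
`max P - min P ≤ W`, then `|P| ≤ ⌊W/p⌋ + 1`. -/
theorem occurrence_count_bound {α : Type*} {s w : List α} {p W : ℕ}
    (hshort : IsShortestPeriodLen s p)
    (P : Finset ℕ) (hne : P.Nonempty)
    (hocc : ∀ i ∈ P, OccursAt s w i)
    (hspan1 : P.max' hne - P.min' hne ≤ s.length - p)
    (hspan2 : P.max' hne - P.min' hne ≤ W) :
    P.card ≤ W / p + 1 := by
  obtain ⟨⟨π, ⟨hπne, _⟩, hπlen⟩, hmin⟩ := hshort
  have hp1 : 1 ≤ p := by
    rw [← hπlen]; exact List.length_pos_iff.2 hπne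
  set m := P.min' hne with hm
  set M := P.max' hne with hM
  -- any two distinct occurrences are at distance ≥ p
  have key : ∀ x ∈ P, ∀ y ∈ P, x < y → p ≤ y - x := by
    intro x hx y hy hxy
    set d := y - x with hd
    have hd1 : 1 ≤ d := by omega
    have hxm : m ≤ x := P.min'_le x hx
    have hyM : y ≤ M := P.le_max' y hy
    have hdle : d ≤ s.length - p := le_trans (by omega) hspan1
    have hds : d ≤ s.length := le_trans hdle (Nat.sub_le _ _)
    obtain ⟨hxw, hxocc⟩ := hocc x hx
    obtain ⟨hyw, hyocc⟩ := hocc y hy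
    -- self-overlap: s.drop d is a prefix of s
    have hover : s.drop d <+: s := by
      have h1 : ((w.drop x).take s.length).drop d = (w.drop y).take (s.length - d) := by
        rw [List.drop_take, List.drop_drop]
        congr 2
        omega
      rw [hxocc] at h1
      have h2 : ((w.drop y).take s.length).take (s.length - d) =
          (w.drop y).take (s.length - d) := by
        rw [List.take_take, min_eq_left (Nat.sub_le _ _)]
      rw [hyocc] at h2
      rw [show s.drop d = s.take (s.length - d) from h1.trans h2.symm]
      exact List.take_prefix _ _
    obtain ⟨i, hi1, τ, hτ, heq⟩ := period_aux s.length s d rfl hd1 hds hover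
    have hlen : (s.take d).length = d := by
      rw [List.length_take]; exact min_eq_left hds
    have : HasPeriodLen s d := by
      refine ⟨s.take d, ⟨?_, i, hi1, [], τ, List.nil_suffix, hτ, by simpa using heq⟩, hlen⟩
      intro h
      rw [h] at hlen
      simp at hlen
      omega
    exact hmin d this
  -- counting: map x to (x - m) / p
  have hinj : Set.InjOn (fun x => (x - m) / p) P := by
    intro x hx y hy hxy
    have hxy' : (x - m) / p = (y - m) / p := hxy
    by_contra hne'
    rcases Nat.lt_or_ge x y with h | h
    · have hpxy := key x hx y hy h
      have hxm : m ≤ x := P.min'_le x hx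
      have : (x - m) / p < (y - m) / p := by
        have h1 : (x - m + p) ≤ y - m := by omega
        calc (x - m) / p < (x - m) / p + 1 := Nat.lt_succ_self _
          _ = (x - m + p) / p := (Nat.add_div_right _ hp1).symm
          _ ≤ (y - m) / p := Nat.div_le_div_right h1
      omega
    · have h' : y < x := by omega
      have hpxy := key y hy x hx h'
      have hym : m ≤ y := P.min'_le y hy
      have : (y - m) / p < (x - m) / p := by
        have h1 : (y - m + p) ≤ x - m := by omega
        calc (y - m) / p < (y - m) / p + 1 := Nat.lt_succ_self _
          _ = (y - m + p) / p := (Nat.add_div_right _ hp1).symm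
          _ ≤ (x - m) / p := Nat.div_le_div_right h1
      omega
  have hsub : P.image (fun x => (x - m) / p) ⊆ Finset.range (W / p + 1) := by
    intro q hq
    simp only [Finset.mem_image] at hq
    obtain ⟨x, hx, rfl⟩ := hq
    have hxM : x ≤ M := P.le_max' x hx
    have hxm : m ≤ x := P.min'_le x hx
    have : (x - m) / p ≤ W / p := Nat.div_le_div_right (by omega)
    simp only [Finset.mem_range]
    omega
  calc P.card = (P.image (fun x => (x - m) / p)).card :=
        (Finset.card_image_of_injOn hinj).symm
    _ ≤ (Finset.range (W / p + 1)).card := Finset.card_le_card hsub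
    _ = W / p + 1 := Finset.card_range _
end
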